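/- arXiv:2006.14717 — 3 statements merged into one kernel-verified Lean document; each statement's English description precedes it below -/
import Mathlib

section
/- Let S = k[x_1,x_2,x_3] and let d = (d_1,d_2,d_3) with 1 ≤ d_1 ≤ d_2 ≤ d_3, and 1 ≤ D ≤ d_1+d_2+d_3-3. Let a ∈ {1,2,3} be such that Σ_{i=1}^{a-1}(d_i-1) < D ≤ Σ_{i=1}^{a}(d_i-1), and define c = (c_1,c_2,c_3) by c_i = 1 for i < a, c_a = d_a - (D - Σ_{i=1}^{a-1}(d_i-1)), and c_i = d_i for i > a. Let U_D be the lexicographically largest monomial of degree D not in (x_1^{d_1},x_2^{d_2},x_3^{d_3}). Then the colon ideal (x_1^{d_1},x_2^{d_2},x_3^{d_3}) : U_D equals (x_1^{c_1},x_2^{c_2},x_3^{c_3}). -/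
open MvPolynomial Finsupp

variable {k : Type} [Field k]

/-- Hilbert function of `S/I` in degree `m`, where `S = k[x_1,...,x_n]`. -/
noncomputable def HF {n : ℕ} (I : Ideal (MvPolynomial (Fin n) k)) (m : ℕ) : ℕ :=
  Module.finrank k
    ((homogeneousSubmodule (Fin n) k m).map (Ideal.Quotient.mkₐ k I).toLinearMap)

/-- The ideal `(x_1^{d_1},...,x_h^{d_h})` inside `k[x_1,...,x_n]`. -/
noncomputable def pows {n h : ℕ} (hh : h ≤ n) (d : Fin h → ℕ) :
    Ideal (MvPolynomial (Fin n) k) :=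
  Ideal.span (Set.range fun i : Fin h => (X (Fin.castLE hh i) : MvPolynomial (Fin n) k) ^ d i)

/-- `u` is the exponent vector of the lexicographically largest monomial of degree `D`
not belonging to the ideal `I` (convention `x_1 > x_2 > ... > x_n`). -/
def IsLexLargestNonmember {n : ℕ} (I : Ideal (MvPolynomial (Fin n) k)) (D : ℕ)
    (u : Fin n →₀ ℕ) : Prop :=
  (∑ i, u i) = D ∧ (monomial u (1 : k)) ∉ I ∧
    ∀ v : Fin n →₀ ℕ, (∑ i, v i) = D → (monomial v (1 : k)) ∉ I → toLex v ≤ toLex u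

/-- Hilbert–Samuel (cumulative Hilbert) function of `S/I`. -/
noncomputable def cumHF {n : ℕ} (I : Ideal (MvPolynomial (Fin n) k)) (m : ℕ) : ℤ :=
  ∑ j ∈ Finset.range (m + 1), (HF I j : ℤ)

/-- Forward difference operator. -/
def diffOp (f : ℕ → ℤ) : ℕ → ℤ := fun m => f (m + 1) - f m

/-- The multiplicity `e(S/I)`, where `t = dim S/I`: the eventual (constant) value of the
`t`-th finite difference of the Hilbert–Samuel function of `S/I`. -/
noncomputable def mult {n : ℕ} (I : Ideal (MvPolynomial (Fin n) k)) (t : ℕ) : ℤ :=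
  Filter.limsup (diffOp^[t] (cumHF I)) Filter.atTop

/-- The height of an ideal: the infimum of heights of primes containing it. -/
noncomputable def idealHeight {n : ℕ} (I : Ideal (MvPolynomial (Fin n) k)) : ℕ∞ :=
  ⨅ (P : PrimeSpectrum (MvPolynomial (Fin n) k)) (_ : I ≤ P.asIdeal), Order.height P

/-- A homogeneous ideal. -/
def IsHomogeneousIdeal {n : ℕ} (I : Ideal (MvPolynomial (Fin n) k)) : Prop :=
  ∀ f ∈ I, ∀ m : ℕ, homogeneousComponent m f ∈ I

/-- Hilbert function of the graded submodule `a/f` of `S/f` in degree `m`. -/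
noncomputable def HFsub {n : ℕ} (f a : Ideal (MvPolynomial (Fin n) k)) (m : ℕ) : ℕ :=
  Module.finrank k
    ((Submodule.map (Ideal.Quotient.mkₐ k f).toLinearMap (homogeneousSubmodule (Fin n) k m)) ⊓
      (Submodule.map (Ideal.Quotient.mkₐ k f).toLinearMap (Submodule.restrictScalars k a)) :
      Submodule k (MvPolynomial (Fin n) k ⧸ f))

/-! `f · x^u` lies in `(x_i^{d_i})` iff every monomial of `f` is divisible by some
`x_i^{d_i - u_i}`, so the colon ideal is `(x_i^{d_i - u_i})`, and it remains to show `u + c = d`.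
The lex-largest non-member `u` of degree `D` is filled greedily: if `u_j > 0` and
`u_i < d_i - 1` for some `i < j`, moving one unit of exponent from `x_j` to `x_i` gives a
lex-larger non-member of the same degree. Hence
`u = (d_1 - 1, …, d_{a-1} - 1, D - ∑_{i<a} (d_i - 1), 0, …, 0) = d - c`. -/

theorem mem_pows_iff {n : ℕ} {d : Fin n → ℕ} {f : MvPolynomial (Fin n) k} :
    f ∈ pows (k := k) le_rfl d ↔ ∀ m ∈ f.support, ∃ i, d i ≤ m i := by
  have hgens : (fun i : Fin n => (X (Fin.castLE le_rfl i) : MvPolynomial (Fin n) k) ^ d i) =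
      (fun s => monomial s (1 : k)) ∘ fun i => Finsupp.single i (d i) :=
    funext fun i => by simp [X_pow_eq_monomial]
  rw [pows, hgens, Set.range_comp, mem_ideal_span_monomial_image]
  simp [Finsupp.single_le_iff]

theorem monomial_mem_pows_iff {n : ℕ} {d : Fin n → ℕ} {v : Fin n →₀ ℕ} :
    monomial v (1 : k) ∈ pows (k := k) le_rfl d ↔ ∃ i, d i ≤ v i := by
  classical
  simp [mem_pows_iff, support_monomial]

theorem mul_monomial_mem_pows_iff {n : ℕ} {d : Fin n → ℕ} {u : Fin n →₀ ℕ}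
    {f : MvPolynomial (Fin n) k} :
    f * monomial u 1 ∈ pows (k := k) le_rfl d ↔ ∀ m ∈ f.support, ∃ i, d i ≤ m i + u i := by
  rw [mem_pows_iff]
  constructor
  · intro h m hm
    have hmu : m + u ∈ (f * monomial u 1).support := by
      rwa [MvPolynomial.mem_support_iff, coeff_mul_monomial', if_pos le_add_self,
        add_tsub_cancel_right, mul_one, ← MvPolynomial.mem_support_iff]
    simpa using h (m + u) hmu
  · intro h m hm
    rw [MvPolynomial.mem_support_iff, coeff_mul_monomial'] at hm
    split_ifs at hm with hum
    · obtain ⟨i, hi⟩ := h (m - u) (MvPolynomial.mem_support_iff.mpr (by simpa using hm))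
      have := Finsupp.le_def.mp hum i
      exact ⟨i, by simp only [Finsupp.tsub_apply] at hi; omega⟩
    · exact absurd rfl hm

theorem colon_pows_span_monomial {n : ℕ} {c d : Fin n → ℕ} {u : Fin n →₀ ℕ}
    (hcud : ∀ i, c i + u i = d i) :
    (pows (k := k) le_rfl d).colon (Ideal.span {monomial u (1 : k)}) =
      pows (k := k) le_rfl c := by
  ext f
  rw [Ideal.mem_colon_span_singleton, mul_monomial_mem_pows_iff, mem_pows_iff]
  refine forall₂_congr fun m _ => exists_congr fun i => ?_
  have := hcud i
  omega

theorem IsLexLargestNonmember.apply_lt {n : ℕ} {d : Fin n → ℕ} {D : ℕ} {u : Fin n →₀ ℕ}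
    (hu : IsLexLargestNonmember (pows (k := k) le_rfl d) D u) (i : Fin n) : u i < d i := by
  simpa using (not_exists.mp (monomial_mem_pows_iff.not.mp hu.2.1)) i

theorem IsLexLargestNonmember.apply_add_one_eq {n : ℕ} {d : Fin n → ℕ} {D : ℕ} {u : Fin n →₀ ℕ}
    (hu : IsLexLargestNonmember (pows (k := k) le_rfl d) D u) {i j : Fin n} (hij : i < j)
    (hj : u j ≠ 0) : u i + 1 = d i := by
  by_contra hne
  have hi : u i + 1 < d i := by have := hu.apply_lt i; omega
  obtain ⟨w, rfl⟩ : ∃ w, u = w + Finsupp.single j 1 := by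
    refine ⟨u - Finsupp.single j 1, (tsub_add_cancel_of_le ?_).symm⟩
    simpa [Finsupp.single_le_iff] using Nat.one_le_iff_ne_zero.mpr hj
  have hsum : ∑ x, (w + Finsupp.single i 1 : Fin n →₀ ℕ) x = D := by
    rw [← hu.1]
    simp [Finset.sum_add_distrib]
  have hnot : monomial (w + Finsupp.single i 1) (1 : k) ∉ pows (k := k) le_rfl d := by
    refine monomial_mem_pows_iff.not.mpr (not_exists.mpr fun x hx => ?_)
    have hx' := hu.apply_lt x
    simp only [Finsupp.coe_add, Pi.add_apply, Finsupp.single_apply] at hi hx hx'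
    split_ifs at hi hx hx' <;> subst_vars <;> omega
  have hlt : toLex (w + Finsupp.single j 1) < toLex (w + Finsupp.single i 1) := by
    simpa [toLex_add] using add_lt_add_left (Finsupp.Lex.single_lt_iff.mpr hij) (toLex w)
  exact (hu.2.2 _ hsum hnot).not_gt hlt

theorem IsLexLargestNonmember.apply_eq {d : Fin 3 → ℕ} {D : ℕ} {u : Fin 3 →₀ ℕ}
    (hu : IsLexLargestNonmember (pows (k := k) le_rfl d) D u) {a : Fin 3}
    (ha1 : ∑ i ∈ Finset.Iio a, (d i - 1) < D) (ha2 : D ≤ ∑ i ∈ Finset.Iic a, (d i - 1))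
    (i : Fin 3) :
    u i = if i < a then d i - 1 else if i = a then D - ∑ j ∈ Finset.Iio a, (d j - 1) else 0 := by
  have hsum : u 0 + u 1 + u 2 = D := by simpa [Fin.sum_univ_three] using hu.1
  have hu0 := hu.apply_lt 0
  have hu1 := hu.apply_lt 1
  have hu2 := hu.apply_lt 2
  have h01 := hu.apply_add_one_eq (show (0 : Fin 3) < 1 by decide)
  have h02 := hu.apply_add_one_eq (show (0 : Fin 3) < 2 by decide)
  have h12 := hu.apply_add_one_eq (show (1 : Fin 3) < 2 by decide)
  fin_cases a <;> fin_cases i <;>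
    simp [← Finset.filter_gt_eq_Iio, ← Finset.filter_ge_eq_Iic, Finset.sum_filter,
      Fin.sum_univ_three] at ha1 ha2 ⊢ <;> omega

theorem stmt1_general {k : Type} [Field k] (d : Fin 3 → ℕ)
    (D : ℕ)
    (a : Fin 3)
    (ha1 : ∑ i ∈ Finset.Iio a, (d i - 1) < D)
    (ha2 : D ≤ ∑ i ∈ Finset.Iic a, (d i - 1))
    (c : Fin 3 → ℕ)
    (hc : ∀ i, c i = if i < a then 1
      else if i = a then d a - (D - ∑ j ∈ Finset.Iio a, (d j - 1)) else d i)
    (u : Fin 3 →₀ ℕ)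
    (hu : IsLexLargestNonmember (pows (k := k) le_rfl d) D u) :
    (pows (k := k) le_rfl d).colon (Ideal.span {monomial u (1 : k)}) =
      pows (k := k) le_rfl c := by
  refine colon_pows_span_monomial fun i => ?_
  have hui := hu.apply_lt i
  rw [hu.apply_eq ha1 ha2 i] at hui ⊢
  rw [hc i]
  split_ifs at hui ⊢ with _ hia
  · omega
  · subst hia
    omega
  · rfl

theorem stmt1 {k : Type} [Field k] (d : Fin 3 → ℕ) (hd1 : ∀ i, 1 ≤ d i)
    (hmono : Monotone d) (D : ℕ) (hD1 : 1 ≤ D) (hD : D ≤ ∑ i, (d i - 1))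
    (a : Fin 3)
    (ha1 : ∑ i ∈ Finset.Iio a, (d i - 1) < D)
    (ha2 : D ≤ ∑ i ∈ Finset.Iic a, (d i - 1))
    (c : Fin 3 → ℕ)
    (hc : ∀ i, c i = if i < a then 1
      else if i = a then d a - (D - ∑ j ∈ Finset.Iio a, (d j - 1)) else d i)
    (u : Fin 3 →₀ ℕ)
    (hu : IsLexLargestNonmember (pows (k := k) le_rfl d) D u) :
    (pows (k := k) le_rfl d).colon (Ideal.span {monomial u (1 : k)}) =
      pows (k := k) le_rfl c :=
  stmt1_general d D a ha1 ha2 c hc u hu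
end

section
/- Let d = (d_1,...,d_h) with 1 ≤ d_1 ≤ ... ≤ d_h and σ = Σ_{i=1}^h (d_i-1). Define φ_m for 2 ≤ m ≤ σ as φ_m = HF(S̄/(x^d); m) - HF(S̄/((x^d)+(U_{m-1})); m) where S̄ = k[x_1,...,x_h] and U_{m-1} is the lex-largest degree-(m-1) monomial not in (x^d). Then the function m ↦ φ_m is non-increasing for 2 ≤ m ≤ σ. -/
open MvPolynomial Finsupp

variable {k : Type} [Field k]

/-!
The monomials outside a monomial ideal `I` give a `k`-basis of `S/I`, so `HF(S/I; m)` counts the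
degree-`m` exponents not dominated by a generator of `I`. For `I = (x^d)` and a standard monomial
`x^u` of degree `D`, the degree-`(D+1)` standard monomials that `x^u` kills are the `x^u x_i` with
`u_i + 1 < d_i`, so `φ_{D+1} = #{i | u_i + 1 < d_i}`. The lex-largest standard monomial of degree
`D` is obtained greedily, filling `x_1` up to `d_1 - 1`, then `x_2`, and so on; its exponent grows
coordinatewise with `D`, hence the count can only decrease.
-/

theorem restrictScalars_span_monomial_image {σ R : Type*} [CommSemiring R] (S : Set (σ →₀ ℕ)) :
    (Ideal.span ((fun s => monomial s (1 : R)) '' S)).restrictScalars R =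
      restrictSupport R {v | ∃ s ∈ S, s ≤ v} := by
  ext x
  simp only [Submodule.restrictScalars_mem, mem_ideal_span_monomial_image, mem_restrictSupport_iff,
    Set.subset_def, Finset.mem_coe, Set.mem_ofPred_eq]

theorem monomial_mem_span_monomial_image_iff {σ R : Type*} [CommSemiring R] [Nontrivial R]
    {S : Set (σ →₀ ℕ)} {v : σ →₀ ℕ} :
    monomial v (1 : R) ∈ Ideal.span ((fun s => monomial s (1 : R)) '' S) ↔ ∃ s ∈ S, s ≤ v := by
  classical
  simp [mem_ideal_span_monomial_image, support_monomial]

open Finset in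
open Classical in
theorem HF_span_monomial_image {n : ℕ} (S : Set (Fin n →₀ ℕ)) (m : ℕ) :
    HF (Ideal.span ((fun s => monomial s (1 : k)) '' S)) m =
      #{v ∈ finsuppAntidiag univ m | ∀ s ∈ S, ¬ s ≤ v} := by
  set I := Ideal.span ((fun s => monomial s (1 : k)) '' S)
  set T : Finset (Fin n →₀ ℕ) := {v ∈ finsuppAntidiag univ m | ∀ s ∈ S, ¬ s ≤ v}
  have hT : ∀ v, v ∈ T ↔ v.degree = m ∧ ∀ s ∈ S, ¬ s ≤ v := by
    simp [T, degree_eq_sum]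
  have hker : LinearMap.ker (Ideal.Quotient.mkₐ k I).toLinearMap =
      restrictSupport k {v | ∃ s ∈ S, s ≤ v} := by
    rw [← restrictScalars_span_monomial_image]
    ext x
    simp [Ideal.Quotient.eq_zero_iff_mem, I]
  have hli :
      LinearIndependent k fun v : T => Ideal.Quotient.mk I (monomial (v : Fin n →₀ ℕ) 1) := by
    refine ((basisMonomials (Fin n) k).linearIndependent.comp _ Subtype.val_injective).map
      (f := (Ideal.Quotient.mkₐ k I).toLinearMap) ?_
    have hle :
        Submodule.span k (Set.range ((basisMonomials (Fin n) k) ∘ Subtype.val (p := (· ∈ T)))) ≤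
          restrictSupport k {v | ¬ ∃ s ∈ S, s ≤ v} := by
      rw [Submodule.span_le]
      rintro _ ⟨v, rfl⟩
      simpa [coe_basisMonomials] using ((hT v).1 v.2).2
    rw [hker, Submodule.disjoint_def]
    intro x hx hxN
    have h := Set.subset_inter ((mem_restrictSupport_iff k).1 (hle hx))
      ((mem_restrictSupport_iff k).1 hxN)
    rwa [← Set.compl_ofPred, Set.compl_inter_self, Set.subset_empty_iff, Finset.coe_eq_empty,
      MvPolynomial.support_eq_empty] at h
  have hspan : (homogeneousSubmodule (Fin n) k m).map (Ideal.Quotient.mkₐ k I).toLinearMap =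
      Submodule.span k
        (Set.range fun v : T => Ideal.Quotient.mk I (monomial (v : Fin n →₀ ℕ) 1)) := by
    rw [homogeneousSubmodule_eq_finsupp_supported, ← restrictSupport, restrictSupport_eq_span,
      Submodule.map_span, Set.image_image]
    refine le_antisymm (Submodule.span_le.2 ?_) (Submodule.span_mono ?_)
    · rintro _ ⟨v, hv, rfl⟩
      by_cases hvN : ∃ s ∈ S, s ≤ v
      · have h0 : monomial v (1 : k) ∈ LinearMap.ker (Ideal.Quotient.mkₐ k I).toLinearMap := by
          simpa [hker] using hvN
        simp only [LinearMap.mem_ker.1 h0, SetLike.mem_coe, Submodule.zero_mem]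
      · exact Submodule.subset_span ⟨⟨v, (hT v).2 ⟨hv, by simpa using hvN⟩⟩, rfl⟩
    · rintro _ ⟨v, rfl⟩
      exact ⟨v, ((hT v).1 v.2).1, rfl⟩
  rw [HF, hspan, finrank_span_eq_card hli, Fintype.card_coe]

theorem Finsupp.exists_eq_add_single_of_le_of_degree_eq_succ {σ : Type*} {u v : σ →₀ ℕ}
    (huv : u ≤ v) (hdeg : v.degree = u.degree + 1) : ∃ i, v = u + single i 1 := by
  have hw : (toMultiset (v - u)).card = 1 := by
    have := congrArg degree (add_tsub_cancel_of_le huv)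
    rw [map_add, hdeg] at this
    rw [card_toMultiset]
    exact Nat.add_left_cancel this
  obtain ⟨i, hi⟩ := Multiset.card_eq_one.1 hw
  refine ⟨i, ?_⟩
  classical
  rw [← add_tsub_cancel_of_le huv, add_right_inj]
  ext j
  rw [← count_toMultiset, hi, Multiset.count_singleton, single_apply]
  exact if_congr eq_comm rfl rfl

theorem pows_eq_span_monomial_image {n h : ℕ} (hh : h ≤ n) (d : Fin h → ℕ) :
    pows (k := k) hh d = Ideal.span ((fun s => monomial s (1 : k)) ''
      Set.range fun i => single (Fin.castLE hh i) (d i)) := by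
  rw [pows, ← Set.range_comp]
  simp only [Function.comp_def, X_pow_eq_monomial]

theorem pows_sup_span_monomial {n h : ℕ} (hh : h ≤ n) (d : Fin h → ℕ) (u : Fin n →₀ ℕ) :
    pows (k := k) hh d ⊔ Ideal.span {monomial u 1} = Ideal.span ((fun s => monomial s (1 : k)) ''
      insert u (Set.range fun i => single (Fin.castLE hh i) (d i))) := by
  rw [Set.image_insert_eq, Ideal.span_insert, pows_eq_span_monomial_image, sup_comm]

theorem monomial_notMem_pows_iff {n h : ℕ} (hh : h ≤ n) (d : Fin h → ℕ) (v : Fin n →₀ ℕ) :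
    monomial v (1 : k) ∉ pows hh d ↔ ∀ i, v (Fin.castLE hh i) < d i := by
  simp [pows_eq_span_monomial_image, monomial_mem_span_monomial_image_iff, single_le_iff]

open Finset in
theorem HF_pows_sub_HF_pows_sup_monomial {h : ℕ} (d : Fin h → ℕ) {D : ℕ} {u : Fin h →₀ ℕ}
    (hdeg : ∑ i, u i = D) (hu : monomial u (1 : k) ∉ pows le_rfl d) :
    HF (pows (k := k) le_rfl d) (D + 1) -
        HF (pows (k := k) le_rfl d ⊔ Ideal.span {monomial u (1 : k)}) (D + 1) =
      #{i | u i + 1 < d i} := by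
  classical
  replace hu : ∀ i, u i < d i := (monomial_notMem_pows_iff le_rfl d u).1 hu
  set A : Finset (Fin h →₀ ℕ) := {v ∈ finsuppAntidiag univ (D + 1) | ∀ i, v i < d i}
  have hpows : HF (pows (k := k) le_rfl d) (D + 1) = #A := by
    rw [pows_eq_span_monomial_image, HF_span_monomial_image]
    congr 1; ext v
    simp [A, single_le_iff]
  have hsup : HF (pows (k := k) le_rfl d ⊔ Ideal.span {monomial u (1 : k)}) (D + 1) =
      #{v ∈ A | ¬ u ≤ v} := by
    rw [pows_sup_span_monomial, HF_span_monomial_image]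
    congr 1; ext v
    simp only [A, mem_filter, Set.forall_mem_insert, Set.forall_mem_range, single_le_iff, not_le]
    tauto
  have himage : {v ∈ A | u ≤ v} = image (fun i => u + single i 1) {i | u i + 1 < d i} := by
    ext v
    simp only [A, mem_filter, mem_finsuppAntidiag, mem_image, mem_univ, true_and]
    constructor
    · rintro ⟨⟨⟨hv, -⟩, hvd⟩, huv⟩
      obtain ⟨i, rfl⟩ := exists_eq_add_single_of_le_of_degree_eq_succ huv
        (by rw [degree_eq_sum, degree_eq_sum, hv, hdeg])
      exact ⟨i, by simpa using hvd i, rfl⟩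
    · rintro ⟨i, hi, rfl⟩
      refine ⟨⟨⟨?_, subset_univ _⟩, fun j => ?_⟩, le_self_add⟩
      · simp [sum_add_distrib, hdeg]
      · rcases eq_or_ne i j with rfl | hij
        · simpa using hi
        · simpa [single_apply, hij] using hu j
  rw [hpows, hsup, ← card_filter_add_card_filter_not (s := A) (fun v => u ≤ v), Nat.add_sub_cancel,
    himage]
  exact card_image_of_injective _ ((add_right_injective u).comp (single_left_injective one_ne_zero))

section Greedy

variable {h : ℕ} (d : Fin h → ℕ)

def prefixSum (t : ℕ) : ℕ :=
  ∑ j ∈ Finset.univ.filter (fun j : Fin h => (j : ℕ) < t), (d j - 1)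

noncomputable def greedyExp (D : ℕ) : Fin h →₀ ℕ :=
  equivFunOnFinite.symm fun i => min (d i - 1) (D - prefixSum d i)

theorem greedyExp_apply (D : ℕ) (i : Fin h) :
    greedyExp d D i = min (d i - 1) (D - prefixSum d i) := rfl

theorem filter_val_lt_succ (t : ℕ) (ht : t < h) :
    Finset.univ.filter (fun j : Fin h => (j : ℕ) < t + 1) =
      insert ⟨t, ht⟩ (Finset.univ.filter fun j : Fin h => (j : ℕ) < t) := by
  ext j
  simp only [Finset.mem_insert, Finset.mem_filter, Finset.mem_univ, true_and, Fin.ext_iff]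
  omega

theorem sum_filter_val_lt_succ (f : Fin h → ℕ) (t : ℕ) (ht : t < h) :
    ∑ j ∈ Finset.univ.filter (fun j : Fin h => (j : ℕ) < t + 1), f j =
      ∑ j ∈ Finset.univ.filter (fun j : Fin h => (j : ℕ) < t), f j + f ⟨t, ht⟩ := by
  rw [filter_val_lt_succ t ht, Finset.sum_insert (by simp), add_comm]

theorem sum_greedyExp_filter_val_lt (D t : ℕ) (ht : t ≤ h) :
    ∑ j ∈ Finset.univ.filter (fun j : Fin h => (j : ℕ) < t), greedyExp d D j =
      min D (prefixSum d t) := by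
  induction t with
  | zero => simp [prefixSum]
  | succ t ih =>
    have hprefix : prefixSum d (t + 1) = prefixSum d t + (d ⟨t, ht⟩ - 1) :=
      sum_filter_val_lt_succ _ t ht
    rw [sum_filter_val_lt_succ _ t ht, ih (by omega), hprefix, greedyExp_apply]
    dsimp only
    omega

theorem sum_greedyExp {D : ℕ} (hD : D ≤ ∑ i, (d i - 1)) : ∑ i, greedyExp d D i = D := by
  have huniv : Finset.univ.filter (fun j : Fin h => (j : ℕ) < h) = Finset.univ := by
    ext j; simp
  have := sum_greedyExp_filter_val_lt d D h le_rfl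
  rw [prefixSum, huniv] at this
  rw [this]
  omega

theorem greedyExp_lt {i : Fin h} (hi : 1 ≤ d i) (D : ℕ) : greedyExp d D i < d i := by
  rw [greedyExp_apply]
  omega

theorem greedyExp_mono : Monotone (greedyExp d) := fun D D' hDD i => by
  simp only [greedyExp_apply]
  omega

theorem toLex_le_toLex_greedyExp {v : Fin h →₀ ℕ} (hv : ∀ i, v i < d i) :
    toLex v ≤ toLex (greedyExp d (∑ i, v i)) := by
  by_contra hcon
  obtain ⟨j, hagree, hlt⟩ := Finsupp.lex_def.mp (lt_of_not_ge hcon)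
  have hprefix : ∑ i ∈ Finset.univ.filter (fun i : Fin h => (i : ℕ) < j), v i =
      min (∑ i, v i) (prefixSum d j) := by
    rw [← sum_greedyExp_filter_val_lt d _ j j.isLt.le]
    exact Finset.sum_congr rfl fun i hi => (hagree i (by simpa using hi)).symm
  have hle : ∑ i ∈ insert j (Finset.univ.filter fun i : Fin h => (i : ℕ) < j), v i ≤
      ∑ i, v i :=
    Finset.sum_le_sum_of_subset (Finset.subset_univ _)
  rw [Finset.sum_insert (by simp), hprefix] at hle
  have hj : greedyExp d _ j < v j := hlt
  rw [greedyExp_apply] at hj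
  have := hv j
  omega

end Greedy

theorem IsLexLargestNonmember.eq_greedyExp {h : ℕ} {d : Fin h → ℕ} (hd : ∀ i, 1 ≤ d i) {D : ℕ}
    (hD : D ≤ ∑ i, (d i - 1)) {u : Fin h →₀ ℕ}
    (hu : IsLexLargestNonmember (pows (k := k) le_rfl d) D u) : u = greedyExp d D := by
  obtain ⟨hdeg, hu, hmax⟩ := hu
  rw [monomial_notMem_pows_iff (k := k)] at hu
  refine toLex.injective (le_antisymm ?_ (hmax _ (sum_greedyExp d hD) ?_))
  · simpa [hdeg] using toLex_le_toLex_greedyExp d hu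
  · rw [monomial_notMem_pows_iff (k := k)]
    exact fun i => greedyExp_lt d (hd i) D

theorem stmt12_general {k : Type} [Field k] {h : ℕ} (d : Fin h → ℕ) (hd1 : ∀ i, 1 ≤ d i)
    (m : ℕ) (hm2 : 2 ≤ m) (hmσ : m + 1 ≤ ∑ i, (d i - 1))
    (u u' : Fin h →₀ ℕ)
    (hu : IsLexLargestNonmember (pows (k := k) le_rfl d) (m - 1) u)
    (hu' : IsLexLargestNonmember (pows (k := k) le_rfl d) m u') :
    HF (pows (k := k) le_rfl d) (m + 1) -
        HF (pows (k := k) le_rfl d ⊔ Ideal.span {monomial u' (1 : k)}) (m + 1) ≤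
      HF (pows (k := k) le_rfl d) m -
        HF (pows (k := k) le_rfl d ⊔ Ideal.span {monomial u (1 : k)}) m := by
  have hφ := HF_pows_sub_HF_pows_sup_monomial d hu.1 hu.2.1
  have hφ' := HF_pows_sub_HF_pows_sup_monomial d hu'.1 hu'.2.1
  rw [Nat.sub_add_cancel (by omega)] at hφ
  rw [hφ, hφ']
  have hle : u ≤ u' := by
    rw [hu.eq_greedyExp hd1 (by omega), hu'.eq_greedyExp hd1 (by omega)]
    exact greedyExp_mono d (Nat.sub_le m 1)
  refine Finset.card_le_card fun i => ?_
  simp only [Finset.mem_filter, Finset.mem_univ, true_and]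
  have := hle i
  omega

theorem stmt12 {k : Type} [Field k] {h : ℕ} (d : Fin h → ℕ) (hd1 : ∀ i, 1 ≤ d i)
    (hmono : Monotone d) (m : ℕ) (hm2 : 2 ≤ m) (hmσ : m + 1 ≤ ∑ i, (d i - 1))
    (u u' : Fin h →₀ ℕ)
    (hu : IsLexLargestNonmember (pows (k := k) le_rfl d) (m - 1) u)
    (hu' : IsLexLargestNonmember (pows (k := k) le_rfl d) m u') :
    HF (pows (k := k) le_rfl d) (m + 1) -
        HF (pows (k := k) le_rfl d ⊔ Ideal.span {monomial u' (1 : k)}) (m + 1) ≤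
      HF (pows (k := k) le_rfl d) m -
        HF (pows (k := k) le_rfl d ⊔ Ideal.span {monomial u (1 : k)}) m :=
  stmt12_general d hd1 m hm2 hmσ u u' hu hu'
end

section
/- In S = k[x_1,x_2,x_3] with char(k) = p > 0, let a = (x_1^{p^2}, x_2^{p^2}, x_1 x_3^{p^2}). For every linear form y = λ_1 x_1 + λ_2 x_2 + λ_3 x_3 that is a nonzerodivisor on S/(x_1^{p^2}, x_2^{p^2}) (equivalently λ_3 ≠ 0), the element x_1 x_3^{p^2} lies in the ideal (x_1^{p^2}, x_2^{p^2}, y). -/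
open MvPolynomial Finsupp

variable {k : Type} [Field k]

theorem stmt18 {k : Type} [Field k] (p : ℕ) [CharP k p] (hp : 0 < p)
    (l : Fin 3 → k) (hl : l 2 ≠ 0) :
    (X 0 * X 2 ^ (p ^ 2) : MvPolynomial (Fin 3) k) ∈
      Ideal.span {(X 0 : MvPolynomial (Fin 3) k) ^ (p ^ 2), X 1 ^ (p ^ 2),
        C (l 0) * X 0 + C (l 1) * X 1 + C (l 2) * X 2} := by
  haveI : NeZero p := ⟨hp.ne'⟩
  haveI : Fact p.Prime := CharP.char_is_prime_of_pos k p
  set q := p ^ 2 with hq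
  set y : MvPolynomial (Fin 3) k := C (l 0) * X 0 + C (l 1) * X 1 + C (l 2) * X 2 with hy
  set I := Ideal.span {(X 0 : MvPolynomial (Fin 3) k) ^ q, X 1 ^ q, y} with hI
  have hyI : y ∈ I := Ideal.subset_span (by simp)
  have hx0 : (X 0 : MvPolynomial (Fin 3) k) ^ q ∈ I := Ideal.subset_span (by simp)
  have hx1 : (X 1 : MvPolynomial (Fin 3) k) ^ q ∈ I := Ideal.subset_span (by simp)
  have hfrob : (C (l 2) * X 2 : MvPolynomial (Fin 3) k) ^ q
      = y ^ q - (C (l 0) * X 0) ^ q - (C (l 1) * X 1) ^ q := by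
    have h2 : (C (l 2) * X 2 : MvPolynomial (Fin 3) k) = y - C (l 0) * X 0 - C (l 1) * X 1 := by
      rw [hy]; ring
    rw [h2, hq, sub_pow_char_pow, sub_pow_char_pow]
  have hc : (C ((l 2)⁻¹) * C (l 2) : MvPolynomial (Fin 3) k) = 1 := by
    rw [← C_mul, inv_mul_cancel₀ hl, C_1]
  have key : (X 0 * X 2 ^ q : MvPolynomial (Fin 3) k)
      = C ((l 2)⁻¹) ^ q * X 0 * ((C (l 2) * X 2) ^ q) := by
    rw [mul_pow, show (C ((l 2)⁻¹) : MvPolynomial (Fin 3) k) ^ q * X 0 * (C (l 2) ^ q * X 2 ^ q)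
      = (C ((l 2)⁻¹) * C (l 2)) ^ q * (X 0 * X 2 ^ q) by ring, hc, one_pow, one_mul]
  rw [key, hfrob]
  refine I.mul_mem_left _ (sub_mem (sub_mem (I.pow_mem_of_mem hyI q (by positivity)) ?_) ?_)
  · rw [mul_pow]; exact I.mul_mem_left _ hx0
  · rw [mul_pow]; exact I.mul_mem_left _ hx1
end
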